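/- arXiv:2304.09844 — 3 statements merged into one kernel-verified Lean document; each statement's English description precedes it below -/
import Mathlib

section
/- Let G be a graph with maximum degree Δ, K ⊆ V(G), and col a partial proper coloring of G. Let M be a colorful matching in K: a set of anti-edges within K whose endpoints receive the same color, with each anti-edge of M having a distinct color. Let P(K) = [Δ+1] \ col(K) be the clique palette (colors from {1,...,Δ+1} not used by any node of K). Then for every vertex v ∈ K, |P(K)| ≥ |K̂| + 1 + e_v - a_v + |M|, where K̂ is the set of uncolored vertices of K, e_v = |N(v)\K|, and a_v = |K \ N(v)|. -/
/-!
The colors of `[Δ+1]` split into the clique palette and the colors used on `K`. Every used color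
sits on at least one colored vertex of `K` and every color of the colorful matching on at least
two, so `|used| + |M| ≤ |K| - |K̂|`. On the other side
`|K| - a_v = |K ∩ N(v)| = deg v - e_v ≤ Δ - e_v`.
-/

open scoped Classical

open Finset

theorem Finset.card_image_add_card_le_of_one_lt_card_fiber {α β : Type*} [DecidableEq β]
    {f : α → β} {s : Finset α} {t : Finset β} (ht : ∀ b ∈ t, 1 < #{a ∈ s | f a = b}) :
    #(s.image f) + #t ≤ #s := by
  have hts : t ⊆ s.image f := fun b hb => by
    obtain ⟨a, ha⟩ := card_pos.mp (zero_lt_one.trans (ht b hb))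
    rw [mem_filter] at ha
    exact mem_image.mpr ⟨a, ha⟩
  have hfiber : ∀ b ∈ s.image f, 1 + (if b ∈ t then 1 else 0) ≤ #{a ∈ s | f a = b} := by
    intro b hb
    split_ifs with hbt
    · exact ht b hbt
    · obtain ⟨a, ha, rfl⟩ := mem_image.mp hb
      exact card_pos.mpr ⟨a, mem_filter.mpr ⟨ha, rfl⟩⟩
  calc #(s.image f) + #t = ∑ b ∈ s.image f, (1 + if b ∈ t then 1 else 0) := by
        rw [sum_add_distrib, sum_boole, filter_mem_eq_inter, inter_eq_right.mpr hts,
          card_eq_sum_ones, Nat.cast_id]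
    _ ≤ ∑ b ∈ s.image f, #{a ∈ s | f a = b} := sum_le_sum hfiber
    _ = #s := (card_eq_sum_card_image f s).symm

theorem Finset.card_add_card_sdiff_comm {α : Type*} [DecidableEq α] (s t : Finset α) :
    #s + #(t \ s) = #t + #(s \ t) := by
  rw [add_comm, card_sdiff_add_card, add_comm, card_sdiff_add_card, union_comm]

section Coloring

variable {V C : Type*} [Fintype C] [DecidableEq C] (col : V → Option C) (K : Finset V)

theorem card_unused_add_card_used :
    #{c | ∀ u ∈ K, col u ≠ some c} + #{c | ∃ u ∈ K, col u = some c} = Fintype.card C := by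
  rw [← card_univ,
    ← card_filter_add_card_filter_not (s := univ) (fun c => ∀ u ∈ K, col u ≠ some c)]
  simp only [not_forall, not_not, exists_prop]

theorem card_used_add_card_matching_le_card_colored {M : Finset (V × V)}
    (hM : ∀ p ∈ M, p.1 ∈ K ∧ p.2 ∈ K ∧ p.1 ≠ p.2 ∧ col p.1 = col p.2 ∧ (col p.1).isSome)
    (hMcolors : ∀ p ∈ M, ∀ q ∈ M, p ≠ q → col p.1 ≠ col q.1) :
    #{c | ∃ u ∈ K, col u = some c} + #M ≤ #{u ∈ K | col u ≠ none} := by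
  have hused : #{c | ∃ u ∈ K, col u = some c} ≤ #({u ∈ K | col u ≠ none}.image col) := by
    refine card_le_card_of_injOn some (fun c hc => ?_) (Option.some_injective C).injOn
    obtain ⟨u, hu, hcol⟩ := (mem_filter.mp hc).2
    exact mem_image.mpr ⟨u, mem_filter.mpr ⟨hu, by simp [hcol]⟩, hcol⟩
  have hmatched : #(M.image fun p => col p.1) = #M :=
    card_image_of_injOn fun p hp q hq hpq => by_contra fun hne => hMcolors p hp q hq hne hpq
  have hdoubled :
      ∀ b ∈ M.image (fun p => col p.1), 1 < #{u ∈ {u ∈ K | col u ≠ none} | col u = b} := by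
    simp only [mem_image, forall_exists_index, and_imp]
    rintro _ p hp rfl
    obtain ⟨h₁, h₂, hne, hcol, hsome⟩ := hM p hp
    have hcolored := Option.isSome_iff_ne_none.mp hsome
    exact one_lt_card.mpr ⟨p.1, mem_filter.mpr ⟨mem_filter.mpr ⟨h₁, hcolored⟩, rfl⟩,
      p.2, mem_filter.mpr ⟨mem_filter.mpr ⟨h₂, hcol ▸ hcolored⟩, hcol.symm⟩, hne⟩
  have := card_image_add_card_le_of_one_lt_card_fiber hdoubled
  omega

end Coloring

theorem stmt1_general {V : Type*} [Fintype V] [DecidableEq V] (G : SimpleGraph V)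
    [DecidableRel G.Adj] (Δ : ℕ) (hΔ : ∀ v, G.degree v ≤ Δ)
    (col : V → Option (Fin (Δ + 1)))
    (K : Finset V) (M : Finset (V × V))
    (hM : ∀ p ∈ M, p.1 ∈ K ∧ p.2 ∈ K ∧ p.1 ≠ p.2 ∧ ¬ G.Adj p.1 p.2 ∧
      col p.1 = col p.2 ∧ (col p.1).isSome)
    (hMcolors : ∀ p ∈ M, ∀ q ∈ M, p ≠ q → col p.1 ≠ col q.1)
    (v : V) :
    ((K.filter (fun u => col u = none)).card : ℤ) + 1
        + ((G.neighborFinset v \ K).card : ℤ)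
        - ((K \ G.neighborFinset v).card : ℤ)
        + (M.card : ℤ) ≤
      ((Finset.univ.filter (fun c : Fin (Δ + 1) => ∀ u ∈ K, col u ≠ some c)).card : ℤ) := by
  have hpalette : #{c : Fin (Δ + 1) | ∀ u ∈ K, col u ≠ some c} + #{c | ∃ u ∈ K, col u = some c}
      = Δ + 1 := by
    -- the statement decides `∀ u ∈ K, _` through `Fintype V`, hence `convert` rather than `exact`
    convert card_unused_add_card_used col K
    exact (Fintype.card_fin _).symm
  have hsplit : #{u ∈ K | col u = none} + #{u ∈ K | col u ≠ none} = #K :=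
    card_filter_add_card_filter_not _
  have hcolors := card_used_add_card_matching_le_card_colored col K
    (fun p hp => let ⟨h₁, h₂, hne, _, hcol, hsome⟩ := hM p hp; ⟨h₁, h₂, hne, hcol, hsome⟩)
    hMcolors
  have hdeg := card_add_card_sdiff_comm K (G.neighborFinset v)
  rw [G.card_neighborFinset_eq_degree] at hdeg
  have hΔv := hΔ v
  omega

/-- with a colorful matching `M` in `K`, the clique palette satisfies
`|P(K)| ≥ |K̂| + 1 + e_v - a_v + |M|` for every `v ∈ K`. -/
theorem stmt1 {V : Type*} [Fintype V] [DecidableEq V] (G : SimpleGraph V)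
    [DecidableRel G.Adj] (Δ : ℕ) (hΔ : ∀ v, G.degree v ≤ Δ)
    (col : V → Option (Fin (Δ + 1)))
    (hproper : ∀ u w, G.Adj u w → ∀ c, col u = some c → col w ≠ some c)
    (K : Finset V) (M : Finset (V × V))
    (hM : ∀ p ∈ M, p.1 ∈ K ∧ p.2 ∈ K ∧ p.1 ≠ p.2 ∧ ¬ G.Adj p.1 p.2 ∧
      col p.1 = col p.2 ∧ (col p.1).isSome)
    (hMcolors : ∀ p ∈ M, ∀ q ∈ M, p ≠ q → col p.1 ≠ col q.1)
    (hMmatching : ∀ p ∈ M, ∀ q ∈ M, p ≠ q →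
      p.1 ≠ q.1 ∧ p.1 ≠ q.2 ∧ p.2 ≠ q.1 ∧ p.2 ≠ q.2)
    (v : V) (hv : v ∈ K) :
    ((K.filter (fun u => col u = none)).card : ℤ) + 1
        + ((G.neighborFinset v \ K).card : ℤ)
        - ((K \ G.neighborFinset v).card : ℤ)
        + (M.card : ℤ) ≤
      ((Finset.univ.filter (fun c : Fin (Δ + 1) => ∀ u ∈ K, col u ≠ some c)).card : ℤ) :=
  stmt1_general G Δ hΔ col K M hM hMcolors v
end

section
/- Let ε, ε' be positive reals with ε + ε' < 1/2. Let K be a finite ε-almost-clique-like vertex set in a graph G, i.e., every v ∈ K satisfies |N(v) ∩ K| ≥ (1-ε)|K|. Let T ⊆ K be a bucket of a k-bucketing of K that is ε'-AC-preserved, i.e., for all v ∈ K, |N(v) ∩ T| ∈ [(1-ε')|N(v)∩K|/k, (1+ε')|N(v)∩K|/k]. Then |T| ∈ [(1 - 2(ε+ε'))|K|/k, (1 + 2(ε+ε'))|K|/k] and T is 2(ε+ε')-almost-clique-like, i.e., every v ∈ T satisfies |N(v) ∩ T| ≥ (1 - 2(ε+ε'))|T|. -/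
open scoped Classical

lemma stmt6_swap {V : Type*} [Fintype V] [DecidableEq V] (G : SimpleGraph V)
    [DecidableRel G.Adj] (K T : Finset V) :
    ∑ v ∈ K, ((G.neighborFinset v ∩ T).card) =
      ∑ u ∈ T, ((G.neighborFinset u ∩ K).card) := by
  have h : ∀ (A B : Finset V), ∀ v, (G.neighborFinset v ∩ A) =
      A.filter (fun u => G.Adj v u) := by
    intro A B v
    ext u
    simp [SimpleGraph.mem_neighborFinset, and_comm]
  calc ∑ v ∈ K, ((G.neighborFinset v ∩ T).card)
      = ∑ v ∈ K, ∑ u ∈ T, if G.Adj v u then 1 else 0 := by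
        refine Finset.sum_congr rfl fun v _ => ?_
        rw [h T K v, Finset.card_filter]
    _ = ∑ u ∈ T, ∑ v ∈ K, if G.Adj u v then 1 else 0 := by
        rw [Finset.sum_comm]
        refine Finset.sum_congr rfl fun u _ => Finset.sum_congr rfl fun v _ => ?_
        simp [G.adj_comm]
    _ = ∑ u ∈ T, ((G.neighborFinset u ∩ K).card) := by
        refine Finset.sum_congr rfl fun u _ => ?_
        rw [h K T u, Finset.card_filter]

set_option maxHeartbeats 1000000 in
/-- an ε'-AC-preserved bucket `T` of a k-bucketing of an ε-AC-like set `K`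
has size `(1 ± 2(ε+ε'))|K|/k` and is `2(ε+ε')`-AC-like. -/
theorem stmt6 {V : Type*} [Fintype V] [DecidableEq V] (G : SimpleGraph V)
    [DecidableRel G.Adj] (ε ε' : ℝ) (hε : 0 < ε) (hε' : 0 < ε')
    (hsum : ε + ε' < 1/2) (K T : Finset V) (hTK : T ⊆ K) (k : ℕ) (hk : 1 ≤ k)
    (hAC : ∀ v ∈ K, (1 - ε) * K.card ≤ ((G.neighborFinset v ∩ K).card : ℝ))
    (hpres : ∀ v ∈ K,
      (1 - ε') * ((G.neighborFinset v ∩ K).card : ℝ) / k ≤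
          ((G.neighborFinset v ∩ T).card : ℝ) ∧
        ((G.neighborFinset v ∩ T).card : ℝ) ≤
          (1 + ε') * ((G.neighborFinset v ∩ K).card : ℝ) / k) :
    ((1 - 2 * (ε + ε')) * K.card / k ≤ (T.card : ℝ) ∧
      (T.card : ℝ) ≤ (1 + 2 * (ε + ε')) * K.card / k) ∧
    ∀ v ∈ T, (1 - 2 * (ε + ε')) * T.card ≤ ((G.neighborFinset v ∩ T).card : ℝ) := by
  have hkpos : (0:ℝ) < k := by exact_mod_cast hk
  rcases Finset.eq_empty_or_nonempty K with hKe | hKne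
  · subst hKe
    have hTe : T = ∅ := Finset.subset_empty.mp hTK
    subst hTe
    simp
  set n : ℝ := (K.card : ℝ) with hn
  have hnpos : 0 < n := by
    have h0 : 0 < K.card := Finset.card_pos.mpr hKne
    rw [hn]; exact_mod_cast h0
  set t : ℝ := (T.card : ℝ) with ht
  have htnn : 0 ≤ t := by positivity
  -- double counting
  have hswap : (∑ v ∈ K, ((G.neighborFinset v ∩ T).card : ℝ)) =
      ∑ u ∈ T, ((G.neighborFinset u ∩ K).card : ℝ) := by
    exact_mod_cast congrArg (Nat.cast : ℕ → ℝ) (stmt6_swap G K T)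
  -- per-vertex lower bound on |N(v) ∩ T|
  have hεlt : ε < 1/2 := by linarith
  have hε'lt : ε' < 1/2 := by linarith
  have hlow : ∀ v ∈ K, (1 - ε') * ((1 - ε) * n) / k ≤
      ((G.neighborFinset v ∩ T).card : ℝ) := by
    intro v hv
    have h1 := (hpres v hv).1
    have h2 := hAC v hv
    have : (1 - ε') * ((1 - ε) * n) / k ≤
        (1 - ε') * ((G.neighborFinset v ∩ K).card : ℝ) / k := by
      apply div_le_div_of_nonneg_right ?_ hkpos.le
      nlinarith
    linarith
  -- |N(u) ∩ K| ≤ n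
  have hNK : ∀ u : V, ((G.neighborFinset u ∩ K).card : ℝ) ≤ n := by
    intro u
    have h0 := Finset.card_le_card (Finset.inter_subset_right (s₁ := G.neighborFinset u) (s₂ := K))
    rw [hn]; exact_mod_cast h0
  -- lower bound on sum: n * ((1-ε')(1-ε)n/k) ≤ ∑_{v∈K} |N(v)∩T| = ∑_{u∈T} |N(u)∩K| ≤ t * n
  have hS1 : n * ((1 - ε') * ((1 - ε) * n) / k) ≤
      ∑ v ∈ K, ((G.neighborFinset v ∩ T).card : ℝ) := by
    have := Finset.card_nsmul_le_sum K _ _ hlow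
    simpa [nsmul_eq_mul, mul_comm] using this
  have hS2 : (∑ u ∈ T, ((G.neighborFinset u ∩ K).card : ℝ)) ≤ t * n := by
    have := Finset.sum_le_card_nsmul T _ n (fun u _ => hNK u)
    simpa [nsmul_eq_mul, mul_comm] using this
  have hlb : (1 - ε') * ((1 - ε) * n) / k ≤ t := by
    have h := hS1.trans (hswap.le.trans hS2)
    nlinarith [h, hnpos]
  -- upper bound: t * ((1-ε)n) ≤ ∑_{u∈T}|N(u)∩K| = ∑_{v∈K}|N(v)∩T| ≤ n * ((1+ε')n/k)
  have hS3 : t * ((1 - ε) * n) ≤ ∑ u ∈ T, ((G.neighborFinset u ∩ K).card : ℝ) := by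
    have := Finset.card_nsmul_le_sum T _ _ (fun u hu => hAC u (hTK hu))
    simpa [nsmul_eq_mul, mul_comm] using this
  have hS4 : (∑ v ∈ K, ((G.neighborFinset v ∩ T).card : ℝ)) ≤
      n * ((1 + ε') * n / k) := by
    have hub : ∀ v ∈ K, ((G.neighborFinset v ∩ T).card : ℝ) ≤ (1 + ε') * n / k := by
      intro v hv
      have h1 := (hpres v hv).2
      have h2 := hNK v
      have : (1 + ε') * ((G.neighborFinset v ∩ K).card : ℝ) / k ≤ (1 + ε') * n / k := by
        apply div_le_div_of_nonneg_right ?_ hkpos.le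
        nlinarith
      linarith
    have := Finset.sum_le_card_nsmul K _ _ hub
    simpa [nsmul_eq_mul, mul_comm] using this
  have hub : t * (1 - ε) ≤ (1 + ε') * n / k := by
    have h := hS3.trans (hswap.symm.le.trans hS4)
    nlinarith [h, hnpos]
  set d : ℝ := n / k with hd
  have hdnn : 0 ≤ d := by positivity
  have e1 : (1 - ε') * ((1 - ε) * n) / (k:ℝ) = (1 - ε') * (1 - ε) * d := by
    rw [hd]; ring
  have e2 : (1 + ε') * n / (k:ℝ) = (1 + ε') * d := by rw [hd]; ring
  rw [e1] at hlb
  rw [e2] at hub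
  have hsgn : (0:ℝ) ≤ 1 - 2 * (ε + ε') := by linarith
  have hεp : (0:ℝ) < 1 - ε := by linarith
  have hT : ∀ v ∈ T, (1 - ε') * (1 - ε) * d ≤ ((G.neighborFinset v ∩ T).card : ℝ) := by
    intro v hv
    have h1 := hlow v (hTK hv)
    rw [e1] at h1; exact h1
  clear hS1 hS2 hS3 hS4 hswap hpres hAC hNK hlow
  refine ⟨⟨?_, ?_⟩, ?_⟩
  · have e3 : (1 - 2 * (ε + ε')) * n / (k:ℝ) = (1 - 2 * (ε + ε')) * d := by rw [hd]; ring
    rw [e3]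
    nlinarith [mul_nonneg hdnn hε.le, mul_nonneg hdnn hε'.le,
      mul_nonneg (mul_nonneg hdnn hε.le) hε'.le]
  · have e3 : (1 + 2 * (ε + ε')) * n / (k:ℝ) = (1 + 2 * (ε + ε')) * d := by rw [hd]; ring
    rw [e3]
    clear_value d t n
    have key : (1 + ε') * d ≤ ((1 + 2 * (ε + ε')) * d) * (1 - ε) := by
      nlinarith [mul_nonneg (mul_nonneg hdnn hε.le) hsgn, mul_nonneg hdnn hε'.le]
    exact le_of_mul_le_mul_right (by linarith) hεp
  · intro v hv
    have h1 := hT v hv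
    clear_value d t n
    have k1 : ((1 - 2 * (ε + ε')) * t) * (1 - ε) ≤ (1 - 2 * (ε + ε')) * ((1 + ε') * d) := by
      nlinarith [mul_le_mul_of_nonneg_left hub hsgn]
    have k2 : (1 - 2 * (ε + ε')) * ((1 + ε') * d) ≤ ((1 - ε') * (1 - ε) * d) * (1 - ε) := by
      nlinarith [mul_nonneg (mul_nonneg (mul_nonneg hdnn hε.le) hε.le) (by linarith : (0:ℝ) ≤ 1 - ε'),
        mul_nonneg (mul_nonneg hdnn hε.le) hε'.le,
        mul_nonneg (mul_nonneg hdnn hε'.le) hε'.le]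
    have k3 : ((1 - ε') * (1 - ε) * d) * (1 - ε) ≤ ((G.neighborFinset v ∩ T).card : ℝ) * (1 - ε) :=
      mul_le_mul_of_nonneg_right h1 hεp.le
    exact le_of_mul_le_mul_right (by linarith) hεp
end

section
/- Let K be an ε-AC-like set (every v ∈ K has |N(v)∩K| ≥ (1-ε)|K|), and suppose ε + ε' < 1/4. If T is an ε'-AC-preserved bucket of a k-bucketing of K, then T 2-hop connects K: for all u, v ∈ K, |N(u) ∩ N(v) ∩ T| ≥ (1 - 4ε - 4ε')|T| > 0. -/
/-!
Double counting the edges between `T` and `K` gives `(1 - ε) k |T| ≤ (1 + ε') |K|`, while every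
`x ∈ K` has at least `(1 - ε') (1 - ε) |K| / k` neighbours in `T`; together these say that every
vertex of `K` is adjacent to a `(1 - 2ε - 2ε')`-fraction of `T`. Two such neighbourhoods inside `T`
overlap in a `(1 - 4ε - 4ε')`-fraction of `T`, which is positive as soon as `ε + ε' < 1/4`.
-/

open Finset

namespace Finset

theorem card_inter_add_card_inter_le {α : Type*} [DecidableEq α] (A B T : Finset α) :
    #(A ∩ T) + #(B ∩ T) ≤ #(A ∩ B ∩ T) + #T := by
  have hunion : A ∩ T ∪ B ∩ T ⊆ T := union_subset inter_subset_right inter_subset_right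
  have hinter : A ∩ T ∩ (B ∩ T) = A ∩ B ∩ T := by
    rw [inter_inter_inter_comm, inter_self]
  have hinclExcl := card_union_add_card_inter (A ∩ T) (B ∩ T)
  rw [hinter] at hinclExcl
  have hle := card_le_card hunion
  omega

end Finset

namespace SimpleGraph

variable {V : Type*} [Fintype V] [DecidableEq V] (G : SimpleGraph V) [DecidableRel G.Adj]

def IsACLike (K : Finset V) (ε : ℝ) : Prop :=
  ∀ v ∈ K, (1 - ε) * #K ≤ (#(G.neighborFinset v ∩ K) : ℝ)

def IsACPreserved (K T : Finset V) (k : ℕ) (ε' : ℝ) : Prop :=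
  ∀ v ∈ K, (1 - ε') * #(G.neighborFinset v ∩ K) / k ≤ (#(G.neighborFinset v ∩ T) : ℝ) ∧
    (#(G.neighborFinset v ∩ T) : ℝ) ≤ (1 + ε') * #(G.neighborFinset v ∩ K) / k

theorem bipartiteAbove_adj (s : Finset V) (v : V) :
    s.bipartiteAbove G.Adj v = G.neighborFinset v ∩ s := by
  ext w
  simp [bipartiteAbove, and_comm]

theorem bipartiteBelow_adj (s : Finset V) (v : V) :
    s.bipartiteBelow G.Adj v = G.neighborFinset v ∩ s := by
  ext w
  simp [bipartiteBelow, G.adj_comm, and_comm]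

theorem card_mul_le_card_mul_of_neighborFinset_inter {s t : Finset V} {m n : ℝ}
    (hm : ∀ a ∈ s, m ≤ #(G.neighborFinset a ∩ t))
    (hn : ∀ b ∈ t, #(G.neighborFinset b ∩ s) ≤ n) : #s * m ≤ #t * n := by
  simpa only [nsmul_eq_mul] using card_nsmul_le_card_nsmul (s := s) (t := t) G.Adj
    (by simpa only [bipartiteAbove_adj] using hm) (by simpa only [bipartiteBelow_adj] using hn)

variable {G} {K T : Finset V} {k : ℕ} {ε ε' : ℝ}

theorem IsACPreserved.mul_card_le_mul_card_neighborFinset_inter (hK : G.IsACLike K ε)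
    (hT : G.IsACPreserved K T k ε') (hk : 0 < k) (hε' : ε' ≤ 1) {x : V} (hx : x ∈ K) :
    (1 - ε') * ((1 - ε) * #K) ≤ k * #(G.neighborFinset x ∩ T) := by
  have hk' : (0 : ℝ) < k := Nat.cast_pos.mpr hk
  calc (1 - ε') * ((1 - ε) * #K)
      ≤ (1 - ε') * #(G.neighborFinset x ∩ K) :=
        mul_le_mul_of_nonneg_left (hK x hx) (by linarith)
    _ ≤ k * #(G.neighborFinset x ∩ T) := by
      rw [← div_le_iff₀' hk']
      exact (hT x hx).1

theorem IsACPreserved.mul_card_le (hK : G.IsACLike K ε) (hT : G.IsACPreserved K T k ε')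
    (hTK : T ⊆ K) (hKne : K.Nonempty) (hk : 0 < k) (hε' : 0 ≤ ε') :
    (1 - ε) * k * #T ≤ (1 + ε') * #K := by
  have hk' : (0 : ℝ) < k := Nat.cast_pos.mpr hk
  have hKpos : (0 : ℝ) < #K := Nat.cast_pos.mpr hKne.card_pos
  have hupper : ∀ x ∈ K, (#(G.neighborFinset x ∩ T) : ℝ) ≤ (1 + ε') * #K / k := fun x hx =>
    (hT x hx).2.trans <| by
      gcongr
      exact inter_subset_right
  have hcount := G.card_mul_le_card_mul_of_neighborFinset_inter
    (fun w hw => hK w (hTK hw)) hupper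
  have hscaled : (1 - ε) * k * #T * #K ≤ (1 + ε') * #K * #K := by
    calc (1 - ε) * k * #T * #K = k * (#T * ((1 - ε) * #K)) := by ring
      _ ≤ k * (#K * ((1 + ε') * #K / k)) := by gcongr
      _ = (1 + ε') * #K * #K := by field_simp
  exact le_of_mul_le_mul_right hscaled hKpos

theorem IsACPreserved.card_le_card_neighborFinset_inter (hK : G.IsACLike K ε)
    (hT : G.IsACPreserved K T k ε') (hTK : T ⊆ K) (hk : 0 < k) (hε : 0 ≤ ε) (hε' : 0 ≤ ε')
    (hsum : ε + ε' ≤ 1 / 2) {x : V} (hx : x ∈ K) :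
    (1 - 2 * ε - 2 * ε') * #T ≤ (#(G.neighborFinset x ∩ T) : ℝ) := by
  have hk' : (0 : ℝ) < k := Nat.cast_pos.mpr hk
  have hsize := hT.mul_card_le hK hTK ⟨x, hx⟩ hk hε'
  have hdeg := hT.mul_card_le_mul_card_neighborFinset_inter hK hk (by linarith) hx
  have hpoly : (1 - 2 * ε - 2 * ε') * (1 + ε') ≤ (1 - ε) ^ 2 * (1 - ε') := by
    nlinarith [mul_nonneg hε hε', mul_nonneg (sq_nonneg ε) (by linarith : (0 : ℝ) ≤ 1 - ε')]
  have hscaled : (1 - ε) * k * ((1 - 2 * ε - 2 * ε') * #T) ≤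
      (1 - ε) * k * #(G.neighborFinset x ∩ T) := by
    calc (1 - ε) * k * ((1 - 2 * ε - 2 * ε') * #T)
        = (1 - 2 * ε - 2 * ε') * ((1 - ε) * k * #T) := by ring
      _ ≤ (1 - 2 * ε - 2 * ε') * ((1 + ε') * #K) := by gcongr; linarith
      _ ≤ (1 - ε) ^ 2 * (1 - ε') * #K := by
        rw [← mul_assoc]; exact mul_le_mul_of_nonneg_right hpoly (Nat.cast_nonneg _)
      _ = (1 - ε) * ((1 - ε') * ((1 - ε) * #K)) := by ring
      _ ≤ (1 - ε) * (k * #(G.neighborFinset x ∩ T)) := by gcongr; linarith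
      _ = (1 - ε) * k * #(G.neighborFinset x ∩ T) := by ring
  exact le_of_mul_le_mul_left hscaled (mul_pos (by linarith) hk')

theorem IsACPreserved.card_neighborFinset_inter_pos (hK : G.IsACLike K ε)
    (hT : G.IsACPreserved K T k ε') (hk : 0 < k) (hε : ε < 1) (hε' : ε' < 1) {x : V}
    (hx : x ∈ K) : 0 < #(G.neighborFinset x ∩ T) := by
  have hKpos : (0 : ℝ) < #K := Nat.cast_pos.mpr (card_pos.mpr ⟨x, hx⟩)
  have hdeg := hT.mul_card_le_mul_card_neighborFinset_inter hK hk hε'.le hx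
  have hprod : (0 : ℝ) < k * #(G.neighborFinset x ∩ T) :=
    (mul_pos (sub_pos.mpr hε') (mul_pos (sub_pos.mpr hε) hKpos)).trans_le hdeg
  exact_mod_cast pos_of_mul_pos_right hprod (Nat.cast_nonneg k)

end SimpleGraph

/-- if `ε + ε' < 1/4`, an ε'-AC-preserved bucket `T` of a k-bucketing of an
ε-AC-like set `K` 2-hop connects `K`: every pair `u, v ∈ K` has
`|N(u) ∩ N(v) ∩ T| ≥ (1 - 4ε - 4ε')|T| > 0`. -/
theorem stmt7 {V : Type*} [Fintype V] [DecidableEq V] (G : SimpleGraph V)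
    [DecidableRel G.Adj] (ε ε' : ℝ) (hε : 0 < ε) (hε' : 0 < ε')
    (hsum : ε + ε' < 1/4) (K T : Finset V) (hTK : T ⊆ K) (k : ℕ) (hk : 1 ≤ k)
    (hAC : ∀ v ∈ K, (1 - ε) * K.card ≤ ((G.neighborFinset v ∩ K).card : ℝ))
    (hpres : ∀ v ∈ K,
      (1 - ε') * ((G.neighborFinset v ∩ K).card : ℝ) / k ≤
          ((G.neighborFinset v ∩ T).card : ℝ) ∧
        ((G.neighborFinset v ∩ T).card : ℝ) ≤
          (1 + ε') * ((G.neighborFinset v ∩ K).card : ℝ) / k) :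
    ∀ u ∈ K, ∀ v ∈ K,
      (1 - 4 * ε - 4 * ε') * T.card ≤
          ((G.neighborFinset u ∩ G.neighborFinset v ∩ T).card : ℝ) ∧
        0 < ((G.neighborFinset u ∩ G.neighborFinset v ∩ T).card : ℝ) := by
  intro u hu v hv
  have hdeg : ∀ x ∈ K, (1 - 2 * ε - 2 * ε') * #T ≤ (#(G.neighborFinset x ∩ T) : ℝ) :=
    fun x hx => SimpleGraph.IsACPreserved.card_le_card_neighborFinset_inter hAC hpres hTK hk
      hε.le hε'.le (by linarith) hx
  have hoverlap : (#(G.neighborFinset u ∩ T) + #(G.neighborFinset v ∩ T) : ℝ) ≤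
      #(G.neighborFinset u ∩ G.neighborFinset v ∩ T) + #T := by
    exact_mod_cast card_inter_add_card_inter_le _ _ T
  have hTpos : (0 : ℝ) < #T := by
    have hNu := SimpleGraph.IsACPreserved.card_neighborFinset_inter_pos hAC hpres hk
      (by linarith) (by linarith) hu
    exact_mod_cast hNu.trans_le (card_le_card inter_subset_right)
  have hcommon : (1 - 4 * ε - 4 * ε') * #T ≤
      (#(G.neighborFinset u ∩ G.neighborFinset v ∩ T) : ℝ) := by
    linarith [hdeg u hu, hdeg v hv]
  have hfrac : (0 : ℝ) < 1 - 4 * ε - 4 * ε' := by linarith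
  exact ⟨hcommon, (mul_pos hfrac hTpos).trans_le hcommon⟩
end
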